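/- arXiv:1611.00989 — 2 statements merged into one kernel-verified Lean document; each statement's English description precedes it below -/
import Mathlib

section
/- (Piola identity.) Let n ≥ 1 and let X : ℝⁿ → ℝⁿ be of class C². Then each column of the adjugate of the Jacobian matrix of X is divergence-free: for every index i ∈ {1,…,n} and every x ∈ ℝⁿ, Σⱼ ∂ⱼ [ (adj(DX))ⱼᵢ (x) ] = 0. Equivalently, every row of the cofactor matrix of DX is a divergence-free vector field. -/
open scoped BigOperators
open MeasureTheory

/-- Partial derivative `∂ᵢ f` of a scalar function at a point `x`. -/
noncomputable def pd {n : ℕ} (i : Fin n) (f : (Fin n → ℝ) → ℝ) (x : Fin n → ℝ) : ℝ :=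
  fderiv ℝ f x (Pi.single i 1)

/-- Gradient of a scalar function. -/
noncomputable def grad {n : ℕ} (f : (Fin n → ℝ) → ℝ) (x : Fin n → ℝ) : Fin n → ℝ :=
  fun i => pd i f x

/-- Laplacian of a scalar function. -/
noncomputable def lap {n : ℕ} (f : (Fin n → ℝ) → ℝ) (x : Fin n → ℝ) : ℝ :=
  ∑ i, pd i (pd i f) x

/-- Squared euclidean norm of the gradient, `|∇f|² = ∑ᵢ (∂ᵢf)²`. -/
noncomputable def gradNormSq {n : ℕ} (f : (Fin n → ℝ) → ℝ) (x : Fin n → ℝ) : ℝ :=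
  ∑ i, (pd i f x) ^ 2

/-- Divergence of a matrix-valued field: `(matDiv M x)ᵢ = ∑ⱼ ∂ⱼ Mⱼᵢ`. -/
noncomputable def matDiv {n : ℕ} (M : (Fin n → ℝ) → Matrix (Fin n) (Fin n) ℝ)
    (x : Fin n → ℝ) : Fin n → ℝ :=
  fun i => ∑ j, pd j (fun y => M y j i) x

/-- Divergence of a vector field: `vecDiv F x = ∑ᵢ ∂ᵢ Fᵢ`. -/
noncomputable def vecDiv {n : ℕ} (F : (Fin n → ℝ) → (Fin n → ℝ)) (x : Fin n → ℝ) : ℝ :=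
  ∑ i, pd i (fun y => F y i) x

/-- Jacobian matrix of a vector field: `(jacM F x)ᵢⱼ = ∂ⱼ Fᵢ`. -/
noncomputable def jacM {n : ℕ} (F : (Fin n → ℝ) → (Fin n → ℝ)) (x : Fin n → ℝ) :
    Matrix (Fin n) (Fin n) ℝ :=
  Matrix.of fun i j => pd j (fun y => F y i) x

/-! Expanding each cofactor of `DX` by the Leibniz formula and differentiating with the product
rule writes `∑ⱼ ∂ⱼ (adj DX)ⱼᵢ` as a sum of terms indexed by `(j, l, σ)` with `j ≠ l`, each carrying
one second derivative `∂ⱼ∂ₗ Xₖ`. The substitution `(j, l, σ) ↦ (l, j, σ ∘ (j l))` flips the sign of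
the permutation and, by the symmetry of second derivatives, changes nothing else, so the terms
cancel in pairs. -/

section Leibniz

open Finset Equiv

theorem Finset.sum_sum_erase_eq_zero_of_antisymm {ι M : Type*} [DecidableEq ι] [AddCommGroup M]
    (s : Finset ι) (T : ι → ι → M) (hT : ∀ j l, j ≠ l → T l j = -T j l) :
    ∑ j ∈ s, ∑ l ∈ s.erase j, T j l = 0 := by
  rw [sum_sigma']
  refine sum_involution (fun p _ => ⟨p.2, p.1⟩) ?_ ?_ ?_ ?_
  · rintro ⟨j, l⟩ hp
    rw [mem_sigma, mem_erase] at hp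
    simp [hT j l hp.2.1.symm]
  · rintro ⟨j, l⟩ hp - h
    exact (mem_erase.1 (mem_sigma.1 hp).2).1 (congrArg Sigma.fst h)
  · rintro ⟨j, l⟩ hp
    simp only [mem_sigma, mem_erase] at hp ⊢
    exact ⟨hp.2.2, hp.2.1.symm, hp.1⟩
  · intro p _
    rfl

namespace Matrix

variable {ι R : Type*} [Fintype ι] [DecidableEq ι] [CommRing R]

theorem adjugate_apply_eq_sum_perm (A : Matrix ι ι R) (i j : ι) :
    A.adjugate j i = ∑ σ ∈ univ.filter (fun σ : Perm ι => σ j = i),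
      (Perm.sign σ : R) * ∏ k ∈ univ.erase j, A (σ k) k := by
  rw [adjugate_apply, det_apply', sum_filter]
  refine sum_congr rfl fun σ _ => ?_
  split_ifs with hσ
  · rw [← mul_prod_erase _ _ (mem_univ j), hσ, updateRow_self, Pi.single_eq_same, one_mul]
    refine congrArg _ (prod_congr rfl fun k hk => ?_)
    rw [updateRow_ne (hσ ▸ σ.injective.ne (ne_of_mem_erase hk))]
  · refine mul_eq_zero_of_right _ (prod_eq_zero (mem_univ (σ.symm i)) ?_)
    rw [apply_symm_apply, updateRow_self, Pi.single_eq_of_ne]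
    rintro rfl
    exact hσ (apply_symm_apply σ i)

/-- The derivative of `adjugate` at `A` in the direction `A'`: the product rule applied to
`adjugate_apply_eq_sum_perm`. -/
def adjugateDeriv (A A' : Matrix ι ι R) : Matrix ι ι R :=
  of fun j i => ∑ σ ∈ univ.filter (fun σ : Perm ι => σ j = i),
    (Perm.sign σ : R) * ∑ l ∈ univ.erase j, (∏ k ∈ (univ.erase j).erase l, A (σ k) k) * A' (σ l) l

theorem sum_adjugateDeriv_apply_eq_zero (A : Matrix ι ι R) (dA : ι → Matrix ι ι R)
    (hdA : ∀ j k l, dA j k l = dA l k j) (i : ι) :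
    ∑ j, adjugateDeriv A (dA j) j i = 0 := by
  simp only [adjugateDeriv, of_apply, mul_sum]
  simp_rw [sum_comm (s := univ.filter _)]
  refine sum_sum_erase_eq_zero_of_antisymm _ _ fun j l hjl => ?_
  rw [← sum_neg_distrib]
  refine sum_equiv (Equiv.mulRight (Equiv.swap j l)) (fun σ => ?_) (fun σ hσ => ?_)
  · simp [swap_apply_left]
  · have hsign : (Perm.sign (σ * Equiv.swap j l) : R) = -Perm.sign σ := by
      simp [Perm.sign_mul, Perm.sign_swap hjl]
    have hprod : ∏ k ∈ (univ.erase j).erase l, A ((σ * Equiv.swap j l) k) k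
        = ∏ k ∈ (univ.erase l).erase j, A (σ k) k := by
      rw [erase_right_comm]
      refine prod_congr rfl fun k hk => ?_
      rw [Perm.mul_apply, swap_apply_of_ne_of_ne (ne_of_mem_erase hk)
        (ne_of_mem_erase (mem_of_mem_erase hk))]
    rw [coe_mulRight, hsign, hprod, Perm.mul_apply, swap_apply_right, hdA l]
    ring

end Matrix

end Leibniz

section PartialDerivative

variable {n : ℕ} {x : Fin n → ℝ}

theorem pd_fun_sum {ι : Type*} (j : Fin n) (s : Finset ι) {f : ι → (Fin n → ℝ) → ℝ}
    (hf : ∀ k ∈ s, DifferentiableAt ℝ (f k) x) :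
    pd j (fun y => ∑ k ∈ s, f k y) x = ∑ k ∈ s, pd j (f k) x := by
  simp [pd, fderiv_fun_sum hf]

theorem pd_const_mul (j : Fin n) (c : ℝ) {f : (Fin n → ℝ) → ℝ} (hf : DifferentiableAt ℝ f x) :
    pd j (fun y => c * f y) x = c * pd j f x := by
  simp [pd, fderiv_const_mul hf]

theorem pd_finsetProd {ι : Type*} [DecidableEq ι] (j : Fin n) (s : Finset ι)
    {f : ι → (Fin n → ℝ) → ℝ} (hf : ∀ k ∈ s, DifferentiableAt ℝ (f k) x) :
    pd j (fun y => ∏ k ∈ s, f k y) x = ∑ l ∈ s, (∏ k ∈ s.erase l, f k x) * pd j (f l) x := by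
  simp [pd, fderiv_finsetProd hf]

theorem ContDiff.differentiable_pd {f : (Fin n → ℝ) → ℝ} (hf : ContDiff ℝ 2 f) (l : Fin n) :
    Differentiable ℝ (pd l f) :=
  ((hf.fderiv_right (m := 1) (by norm_num)).clm_apply contDiff_const).differentiable one_ne_zero

theorem pd_comm {f : (Fin n → ℝ) → ℝ} (hf : ContDiff ℝ 2 f) (j l : Fin n) :
    pd j (pd l f) x = pd l (pd j f) x := by
  have hd : DifferentiableAt ℝ (fderiv ℝ f) x :=
    (hf.fderiv_right (m := 1) (by norm_num)).differentiable one_ne_zero x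
  have hsnd (u v : Fin n → ℝ) :
      fderiv ℝ (fun y => fderiv ℝ f y u) x v = fderiv ℝ (fderiv ℝ f) x v u := by
    simp [fderiv_clm_apply hd (differentiableAt_const u)]
  change fderiv ℝ (fun y => fderiv ℝ f y (Pi.single l 1)) x (Pi.single j 1)
    = fderiv ℝ (fun y => fderiv ℝ f y (Pi.single j 1)) x (Pi.single l 1)
  rw [hsnd, hsnd]
  exact hf.contDiffAt.isSymmSndFDerivAt (by norm_num) _ _

theorem pd_adjugate_apply {ι : Type*} [Fintype ι] [DecidableEq ι]
    {M : (Fin n → ℝ) → Matrix ι ι ℝ} (hM : ∀ k l, DifferentiableAt ℝ (fun y => M y k l) x)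
    (m : Fin n) (j i : ι) :
    pd m (fun y => (M y).adjugate j i) x
      = (M x).adjugateDeriv (Matrix.of fun k l => pd m (fun y => M y k l) x) j i := by
  simp_rw [Matrix.adjugate_apply_eq_sum_perm]
  have hprod (σ : Equiv.Perm ι) :
      DifferentiableAt ℝ (fun y => ∏ k ∈ Finset.univ.erase j, M y (σ k) k) x :=
    (HasFDerivAt.finsetProd fun k _ => (hM (σ k) k).hasFDerivAt).differentiableAt
  rw [pd_fun_sum m _ fun σ _ => (hprod σ).const_mul _]
  refine Finset.sum_congr rfl fun σ _ => ?_
  rw [pd_const_mul m _ (hprod σ), pd_finsetProd m _ fun k _ => hM (σ k) k]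
  rfl

end PartialDerivative

theorem piola_identity_general {n : ℕ} (X : (Fin n → ℝ) → (Fin n → ℝ))
    (hX : ContDiff ℝ 2 X) (i : Fin n) (x : Fin n → ℝ) :
    ∑ j, pd j (fun y => (jacM X y).adjugate j i) x = 0 := by
  have hXk (k : Fin n) : ContDiff ℝ 2 (fun y => X y k) := (contDiff_apply ℝ ℝ k).comp hX
  have hjac (k l : Fin n) : DifferentiableAt ℝ (fun y => jacM X y k l) x :=
    (hXk k).differentiable_pd l x
  simp_rw [pd_adjugate_apply hjac]
  exact Matrix.sum_adjugateDeriv_apply_eq_zero _ _ (fun j k l => pd_comm (hXk k) j l) i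

/-- Piola identity: each column of the adjugate of the Jacobian
matrix of a C² map `X : ℝⁿ → ℝⁿ` is divergence-free: `∑ⱼ ∂ⱼ[(adj DX)ⱼᵢ] = 0`. -/
theorem piola_identity {n : ℕ} (hn : 1 ≤ n) (X : (Fin n → ℝ) → (Fin n → ℝ))
    (hX : ContDiff ℝ 2 X) (i : Fin n) (x : Fin n → ℝ) :
    ∑ j, pd j (fun y => (jacM X y).adjugate j i) x = 0 :=
  piola_identity_general X hX i x
end

section
/- Let n ≥ 2 and let X : ℝⁿ → ℝⁿ be a C² diffeomorphism with J(x) = det DX(x) > 0 everywhere. Let F : ℝⁿ → ℝⁿ be a C¹ vector field and F̄ = F ∘ X. Then for every x ∈ ℝⁿ, J(x)⁻¹ div( adj(DX) F̄ )(x) = tr( D F̄(x) · (DX(x))⁻¹ ) = Σᵢⱼ (D F̄(x))ᵢⱼ ((DX(x))⁻¹)ⱼᵢ. Consequently (div F) ∘ X = D F̄ : (DX)⁻¹ in the sense of this trace, and div F ≡ 0 if and only if tr( D F̄ · (DX)⁻¹ ) ≡ 0. -/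
open scoped BigOperators
open MeasureTheory

/-!
By the product rule, `div (adj(DX) F̄) = (div adj(DX)) · F̄ + tr (adj(DX) · DF̄)`. The first term
vanishes (Piola identity): `adj(DX)ᵢⱼ` is the determinant of `DX` with row `j` replaced by `eᵢ`;
differentiating it along `eᵢ` row by row produces terms `∂ᵢ∂ₘXₖ · det(row j := eᵢ, row k := eₘ)`,
which are symmetric times antisymmetric in `(i, m)` and cancel after summing over `i`. Since
`adj(DX) = J (DX)⁻¹`, the second term is `J tr (DF̄ (DX)⁻¹)`, and the chain rule
`DF̄ = (DF ∘ X) DX` identifies this trace with `(div F) ∘ X`.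
-/

open Matrix Finset

section PartialDerivatives

variable {n : ℕ} {x : Fin n → ℝ}

theorem HasFDerivAt.pd_eq {f : (Fin n → ℝ) → ℝ} {f' : (Fin n → ℝ) →L[ℝ] ℝ}
    (h : HasFDerivAt f f' x) (i : Fin n) : pd i f x = f' (Pi.single i 1) := by
  rw [pd, h.fderiv]

theorem pd_mul {f g : (Fin n → ℝ) → ℝ} (hf : DifferentiableAt ℝ f x)
    (hg : DifferentiableAt ℝ g x) (i : Fin n) :
    pd i (fun y => f y * g y) x = pd i f x * g x + f x * pd i g x := by
  simp only [pd, fderiv_fun_mul hf hg, _root_.add_apply, _root_.smul_apply, smul_eq_mul]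
  ring

theorem pd_sum {ι : Type*} (s : Finset ι) {f : ι → (Fin n → ℝ) → ℝ}
    (hf : ∀ k ∈ s, DifferentiableAt ℝ (f k) x) (i : Fin n) :
    pd i (fun y => ∑ k ∈ s, f k y) x = ∑ k ∈ s, pd i (f k) x := by
  simp only [pd, fderiv_fun_sum hf, _root_.sum_apply]

theorem pd_const (c : ℝ) (i : Fin n) : pd i (fun _ => c) x = 0 := by
  simp [pd]

theorem pd_apply {ι : Type*} [Fintype ι] {G : (Fin n → ℝ) → ι → ℝ}
    (hG : DifferentiableAt ℝ G x) (i : Fin n) (k : ι) :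
    pd i (fun y => G y k) x = fderiv ℝ G x (Pi.single i 1) k :=
  (hasFDerivAt_pi'.1 hG.hasFDerivAt k).pd_eq i

theorem differentiableAt_pd {f : (Fin n → ℝ) → ℝ} (hf : ContDiffAt ℝ 2 f x) (i : Fin n) :
    DifferentiableAt ℝ (pd i f) x :=
  ((hf.fderiv_right (m := 1) (by norm_num)).differentiableAt one_ne_zero).clm_apply
    (differentiableAt_const _)

theorem pd_pd_comm {f : (Fin n → ℝ) → ℝ} (hf : ContDiffAt ℝ 2 f x) (i m : Fin n) :
    pd i (pd m f) x = pd m (pd i f) x := by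
  have pd_pd_eq : ∀ i m : Fin n, pd i (pd m f) x
      = fderiv ℝ (fderiv ℝ f) x (Pi.single i 1) (Pi.single m 1) := by
    intro i m
    change fderiv ℝ (fun y => fderiv ℝ f y (Pi.single m 1)) x (Pi.single i 1) = _
    rw [fderiv_clm_apply ((hf.fderiv_right (m := 1) (by norm_num)).differentiableAt
      one_ne_zero) (differentiableAt_const _)]
    simp
  have hsymm : IsSymmSndFDerivAt ℝ f x :=
    hf.isSymmSndFDerivAt (by simp [minSmoothness_of_isRCLikeNormedField])
  rw [pd_pd_eq, pd_pd_eq, hsymm.eq]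

theorem jacM_eq_toMatrix' {G : (Fin n → ℝ) → (Fin n → ℝ)} (hG : DifferentiableAt ℝ G x) :
    jacM G x = LinearMap.toMatrix' (fderiv ℝ G x : (Fin n → ℝ) →ₗ[ℝ] (Fin n → ℝ)) := by
  ext i j
  rw [LinearMap.toMatrix'_apply]
  exact pd_apply hG j i

theorem jacM_comp {F X : (Fin n → ℝ) → (Fin n → ℝ)} (hF : DifferentiableAt ℝ F (X x))
    (hX : DifferentiableAt ℝ X x) :
    jacM (fun y => F (X y)) x = jacM F (X x) * jacM X x := by
  rw [jacM_eq_toMatrix' (G := fun y => F (X y)) (hF.comp x hX),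
    jacM_eq_toMatrix' hF, jacM_eq_toMatrix' hX, fderiv_fun_comp x hF hX]
  exact LinearMap.toMatrix'_comp _ _

theorem vecDiv_eq_trace_jacM (F : (Fin n → ℝ) → (Fin n → ℝ)) (y : Fin n → ℝ) :
    vecDiv F y = trace (jacM F y) :=
  rfl

end PartialDerivatives

section Determinant

variable {ι : Type*} [Fintype ι] [DecidableEq ι]

theorem det_updateRow_eq_sum_mul {R : Type*} [CommRing R] (B : Matrix ι ι R) (k : ι)
    (w : ι → R) :
    (B.updateRow k w).det = ∑ m, w m * (B.updateRow k (Pi.single m 1)).det := by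
  rw [← cramer_transpose_apply, cramer_eq_adjugate_mulVec, ← adjugate_transpose]
  simp only [mulVec, dotProduct, transpose_apply, adjugate_apply, mul_comm]

theorem det_updateRow_updateRow_swap {R : Type*} [CommRing R] (B : Matrix ι ι R) {j k : ι}
    (hjk : j ≠ k) (u v : ι → R) :
    ((B.updateRow j u).updateRow k v).det = -((B.updateRow j v).updateRow k u).det := by
  have hswap : ((B.updateRow j v).updateRow k u).submatrix (Equiv.swap j k) id
      = (B.updateRow j u).updateRow k v := by
    ext r c
    rcases eq_or_ne r j with rfl | hrj
    · simp [updateRow_apply, hjk]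
    rcases eq_or_ne r k with rfl | hrk
    · simp [updateRow_apply, hjk]
    · simp [updateRow_apply, Equiv.swap_apply_of_ne_of_ne hrj hrk, hrj, hrk]
  rw [← hswap, det_permute, Equiv.Perm.sign_swap hjk]
  simp

noncomputable def detRowContinuousMultilinear :
    ContinuousMultilinearMap ℝ (fun _ : ι => ι → ℝ) ℝ where
  toMultilinearMap := (detRowAlternating : (ι → ℝ) [⋀^ι]→ₗ[ℝ] ℝ).toMultilinearMap
  cont := continuous_id.matrix_det

variable {n : ℕ} {x : Fin n → ℝ} {A : (Fin n → ℝ) → Matrix ι ι ℝ}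

theorem hasFDerivAt_det_of_rows (hA : ∀ k, DifferentiableAt ℝ (fun y => A y k) x) :
    HasFDerivAt (fun y => (A y).det)
      (∑ k, (detRowContinuousMultilinear.toContinuousLinearMap (A x) k)
        ∘L fderiv ℝ (fun y => A y k) x) x :=
  HasFDerivAt.multilinear_comp detRowContinuousMultilinear (fun k => (hA k).hasFDerivAt)

theorem differentiableAt_det_of_rows (hA : ∀ k, DifferentiableAt ℝ (fun y => A y k) x) :
    DifferentiableAt ℝ (fun y => (A y).det) x :=
  (hasFDerivAt_det_of_rows hA).differentiableAt

theorem pd_det (hA : ∀ k, DifferentiableAt ℝ (fun y => A y k) x) (i : Fin n) :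
    pd i (fun y => (A y).det) x
      = ∑ k, ((A x).updateRow k (fun l => pd i (fun y => A y k l) x)).det := by
  rw [(hasFDerivAt_det_of_rows hA).pd_eq]
  simp only [_root_.sum_apply, ContinuousLinearMap.comp_apply]
  refine sum_congr rfl fun k _ => ?_
  rw [show fderiv ℝ (fun y => A y k) x (Pi.single i 1) = fun l => pd i (fun y => A y k l) x
    from funext fun l => (pd_apply (hA k) i l).symm]
  rfl

end Determinant

theorem sum_sum_mul_eq_zero_of_symm_of_antisymm {ι R : Type*} [Fintype ι] [CommRing R]
    [IsAddTorsionFree R] {s a : ι → ι → R} (hs : ∀ i m, s i m = s m i)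
    (ha : ∀ i m, a i m = -a m i) :
    ∑ i, ∑ m, s i m * a i m = 0 := by
  refine self_eq_neg.1 ?_
  conv_lhs => rw [sum_comm]
  simp only [← sum_neg_distrib]
  exact sum_congr rfl fun i _ => sum_congr rfl fun m _ => by rw [hs, ha, mul_neg]

section Piola

variable {n : ℕ} {X : (Fin n → ℝ) → (Fin n → ℝ)} {x : Fin n → ℝ}

theorem differentiableAt_jacM_row (hX : ContDiffAt ℝ 2 X x) (k : Fin n) :
    DifferentiableAt ℝ (fun y => jacM X y k) x :=
  differentiableAt_pi.2 fun l => differentiableAt_pd (contDiffAt_pi.1 hX k) l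

theorem differentiableAt_jacM_updateRow_row (hX : ContDiffAt ℝ 2 X x) (j : Fin n)
    (b : Fin n → ℝ) (k : Fin n) :
    DifferentiableAt ℝ (fun y => (jacM X y).updateRow j b k) x := by
  rcases eq_or_ne k j with rfl | hkj
  · simp [differentiableAt_const]
  · simpa [updateRow_ne hkj] using differentiableAt_jacM_row hX k

theorem differentiableAt_adjugate_jacM (hX : ContDiffAt ℝ 2 X x) (i j : Fin n) :
    DifferentiableAt ℝ (fun y => (jacM X y).adjugate i j) x := by
  simp only [adjugate_apply]
  exact differentiableAt_det_of_rows (differentiableAt_jacM_updateRow_row hX j _)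

theorem pd_adjugate_jacM (hX : ContDiffAt ℝ 2 X x) (i j : Fin n) :
    pd i (fun y => (jacM X y).adjugate i j) x
      = ∑ k ∈ univ.erase j, ∑ m, pd i (pd m (fun z => X z k)) x
          * (((jacM X x).updateRow j (Pi.single i 1)).updateRow k (Pi.single m 1)).det := by
  simp only [adjugate_apply]
  rw [pd_det (differentiableAt_jacM_updateRow_row hX j _), ← add_sum_erase _ _ (mem_univ j),
    det_eq_zero_of_row_eq_zero j fun l => by simp [pd_const], zero_add]
  refine sum_congr rfl fun k hk => ?_
  simp only [updateRow_ne (mem_erase.1 hk).1]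
  exact det_updateRow_eq_sum_mul _ k _

theorem matDiv_adjugate_jacM (hX : ContDiffAt ℝ 2 X x) :
    matDiv (fun y => (jacM X y).adjugate) x = 0 := by
  funext j
  simp only [matDiv, Pi.zero_apply]
  rw [sum_congr rfl fun i _ => pd_adjugate_jacM hX i j, sum_comm]
  refine sum_eq_zero fun k hk => sum_sum_mul_eq_zero_of_symm_of_antisymm
    (fun i m => pd_pd_comm (contDiffAt_pi.1 hX k) i m)
    (fun i m => det_updateRow_updateRow_swap _ (mem_erase.1 hk).1.symm _ _)

end Piola

theorem vecDiv_mulVec {n : ℕ} {M : (Fin n → ℝ) → Matrix (Fin n) (Fin n) ℝ}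
    {v : (Fin n → ℝ) → (Fin n → ℝ)} {x : Fin n → ℝ}
    (hM : ∀ i j, DifferentiableAt ℝ (fun y => M y i j) x)
    (hv : ∀ j, DifferentiableAt ℝ (fun y => v y j) x) :
    vecDiv (fun y => M y *ᵥ v y) x = matDiv M x ⬝ᵥ v x + trace (M x * jacM v x) := by
  have hterm : ∀ i, pd i (fun y => (M y *ᵥ v y) i) x
      = ∑ j, (pd i (fun y => M y i j) x * v x j + M x i j * jacM v x j i) := by
    intro i
    rw [show (fun y => (M y *ᵥ v y) i) = fun y => ∑ j, M y i j * v y j from rfl,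
      pd_sum (f := fun j y => M y i j * v y j) _ fun j _ => (hM i j).mul (hv j)]
    exact sum_congr rfl fun j _ => pd_mul (hM i j) (hv j) i
  simp only [vecDiv, hterm, sum_add_distrib, matDiv, dotProduct, trace,
    Matrix.diag, mul_apply, sum_mul]
  rw [sum_comm]

theorem magic_formula_lagrangian_divergence_general {n : ℕ}
    (e : (Fin n → ℝ) ≃ (Fin n → ℝ))
    (hX : ContDiff ℝ 2 ⇑e)
    (hJ : ∀ x, 0 < (jacM (⇑e) x).det)
    (F : (Fin n → ℝ) → (Fin n → ℝ)) (hF : ContDiff ℝ 1 F) :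
    (∀ x, ((jacM (⇑e) x).det)⁻¹ *
          (∑ i, pd i (fun y => ∑ j, (jacM (⇑e) y).adjugate i j * F (e y) j) x)
        = Matrix.trace (jacM (fun y => F (e y)) x * (jacM (⇑e) x)⁻¹))
    ∧ (∀ x, Matrix.trace (jacM (fun y => F (e y)) x * (jacM (⇑e) x)⁻¹)
        = ∑ i, ∑ j, jacM (fun y => F (e y)) x i j * (jacM (⇑e) x)⁻¹ j i)
    ∧ (∀ x, vecDiv F (e x)
        = Matrix.trace (jacM (fun y => F (e y)) x * (jacM (⇑e) x)⁻¹))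
    ∧ ((∀ y, vecDiv F y = 0) ↔
        (∀ x, Matrix.trace (jacM (fun y => F (e y)) x * (jacM (⇑e) x)⁻¹) = 0)) := by
  have he : Differentiable ℝ e := hX.differentiable (by norm_num)
  have hFe : Differentiable ℝ fun y => F (e y) := (hF.differentiable one_ne_zero).comp he
  have divergence : ∀ x,
      ∑ i, pd i (fun y => ∑ j, (jacM e y).adjugate i j * F (e y) j) x
        = trace ((jacM e x).adjugate * jacM (fun y => F (e y)) x) := by
    intro x
    have h := vecDiv_mulVec (differentiableAt_adjugate_jacM hX.contDiffAt)
      fun j => differentiableAt_pi.1 (hFe x) j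
    rwa [matDiv_adjugate_jacM hX.contDiffAt, zero_dotProduct, zero_add] at h
  have pullback : ∀ x, vecDiv F (e x) = trace (jacM (fun y => F (e y)) x * (jacM e x)⁻¹) := by
    intro x
    rw [jacM_comp (hF.differentiable one_ne_zero _) (he x), Matrix.mul_assoc,
      mul_nonsing_inv _ (hJ x).ne'.isUnit, Matrix.mul_one, vecDiv_eq_trace_jacM]
  refine ⟨fun x => ?_, fun x => by simp only [trace, Matrix.diag, mul_apply], pullback,
    ⟨fun h x => pullback x ▸ h (e x), fun h y => ?_⟩⟩
  · rw [divergence, trace_mul_comm, Matrix.inv_def, Ring.inverse_eq_inv', Matrix.mul_smul,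
      trace_smul, smul_eq_mul]
  · rw [← e.apply_symm_apply y, pullback]
    exact h _

/-- the "magic" formula: for a C² diffeomorphism `X` with positive
Jacobian `J` and a C¹ vector field `F` with `F̄ = F ∘ X`,
`J⁻¹ div(adj(DX) F̄) = tr(DF̄·(DX)⁻¹) = ∑ᵢⱼ (DF̄)ᵢⱼ ((DX)⁻¹)ⱼᵢ`, hence
`(div F) ∘ X = DF̄ : (DX)⁻¹` and `div F ≡ 0` iff `tr(DF̄·(DX)⁻¹) ≡ 0`. -/
theorem magic_formula_lagrangian_divergence {n : ℕ} (hn : 2 ≤ n)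
    (e : (Fin n → ℝ) ≃ (Fin n → ℝ))
    (hX : ContDiff ℝ 2 ⇑e) (hXinv : ContDiff ℝ 2 ⇑e.symm)
    (hJ : ∀ x, 0 < (jacM (⇑e) x).det)
    (F : (Fin n → ℝ) → (Fin n → ℝ)) (hF : ContDiff ℝ 1 F) :
    (∀ x, ((jacM (⇑e) x).det)⁻¹ *
          (∑ i, pd i (fun y => ∑ j, (jacM (⇑e) y).adjugate i j * F (e y) j) x)
        = Matrix.trace (jacM (fun y => F (e y)) x * (jacM (⇑e) x)⁻¹))
    ∧ (∀ x, Matrix.trace (jacM (fun y => F (e y)) x * (jacM (⇑e) x)⁻¹)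
        = ∑ i, ∑ j, jacM (fun y => F (e y)) x i j * (jacM (⇑e) x)⁻¹ j i)
    ∧ (∀ x, vecDiv F (e x)
        = Matrix.trace (jacM (fun y => F (e y)) x * (jacM (⇑e) x)⁻¹))
    ∧ ((∀ y, vecDiv F y = 0) ↔
        (∀ x, Matrix.trace (jacM (fun y => F (e y)) x * (jacM (⇑e) x)⁻¹) = 0)) :=
  magic_formula_lagrangian_divergence_general e hX hJ F hF
end
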